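/- Let p(x) = c·∏_{k=1}^n (x + a_k) − Σ_{k=1}^n b_k·∏_{i≠k} (x + a_i), where c and all a_k, b_k are positive real numbers. Then p has at most one positive real root. -/
import Mathlib


/-- `p(x) = c·∏ (x + a_k) − Σ b_k·∏_{i≠k} (x + a_i)` with `c, a_k, b_k > 0`
has at most one positive real root. -/
theorem stmt_0 (n : ℕ) (hn : 1 ≤ n) (c : ℝ) (hc : 0 < c) (a b : ℕ → ℝ)
    (ha : ∀ k < n, 0 < a k) (hb : ∀ k < n, 0 < b k)
    (p : ℝ → ℝ)
    (hp : ∀ x, p x = c * ∏ k ∈ Finset.range n, (x + a k)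
        - ∑ k ∈ Finset.range n, b k * ∏ i ∈ (Finset.range n).erase k, (x + a i)) :
    ∀ x y : ℝ, 0 < x → 0 < y → p x = 0 → p y = 0 → x = y := by
  -- key: for x > 0 with p x = 0, c = Σ b_k/(x+a_k)
  have key : ∀ x : ℝ, 0 < x → p x = 0 →
      c = ∑ k ∈ Finset.range n, b k / (x + a k) := by
    intro x hx hpx
    have hpos : ∀ k ∈ Finset.range n, (0:ℝ) < x + a k := by
      intro k hk
      exact add_pos hx (ha k (Finset.mem_range.mp hk))
    have hprodpos : 0 < ∏ k ∈ Finset.range n, (x + a k) := Finset.prod_pos hpos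
    have hsum : ∑ k ∈ Finset.range n, b k * ∏ i ∈ (Finset.range n).erase k, (x + a i)
        = (∑ k ∈ Finset.range n, b k / (x + a k)) * ∏ k ∈ Finset.range n, (x + a k) := by
      rw [Finset.sum_mul]
      apply Finset.sum_congr rfl
      intro k hk
      have h1 : (x + a k) * ∏ i ∈ (Finset.range n).erase k, (x + a i)
          = ∏ i ∈ Finset.range n, (x + a i) := Finset.mul_prod_erase _ (fun i => x + a i) hk
      have hne : x + a k ≠ 0 := ne_of_gt (hpos k hk)
      field_simp
      rw [← h1]; ring
    have := hp x
    rw [hpx, hsum] at this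
    have h2 : (c - ∑ k ∈ Finset.range n, b k / (x + a k))
        * ∏ k ∈ Finset.range n, (x + a k) = 0 := by linarith [this]
    rcases mul_eq_zero.mp h2 with h | h
    · linarith
    · exact absurd h (ne_of_gt hprodpos)
  -- strict antitonicity
  have mono : ∀ x y : ℝ, 0 < x → 0 < y → x < y →
      (∑ k ∈ Finset.range n, b k / (y + a k)) < ∑ k ∈ Finset.range n, b k / (x + a k) := by
    intro x y hx hy hxy
    apply Finset.sum_lt_sum_of_nonempty
    · exact Finset.nonempty_range_iff.mpr (by omega)
    · intro k hk
      have hak := ha k (Finset.mem_range.mp hk)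
      have hbk := hb k (Finset.mem_range.mp hk)
      exact div_lt_div_of_pos_left hbk (add_pos hx hak) (by linarith)
  intro x y hx hy hpx hpy
  by_contra hne
  rcases lt_or_gt_of_ne hne with h | h
  · have := mono x y hx hy h
    rw [← key x hx hpx, ← key y hy hpy] at this
    linarith
  · have := mono y x hy hx h
    rw [← key x hx hpx, ← key y hy hpy] at this
    linarith
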